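/- Let (G,·,▷,Φ) be a twisted post group with sub-adjacent operation ∘ and G_a = {b∘e_a | b∈G}. Then G is the disjoint union of the sets G_a over a∈G: every element of G lies in some G_a, and if G_a ∩ G_b ≠ ∅ then G_a = G_b. -/

import Mathlib

/-- A (left) twisted post group: a group `G` with a binary operation `tri` (written `▷`)
and a cocycle `phi` such that each left multiplication `tri a` is a group automorphism,
`(a ∘ b) ▷ c = a ▷ (b ▷ c)` and `Φ(a ∘ b) = a ∘ Φ(b)`, where `a ∘ b = Φ(a)·(a ▷ b)`. -/
structure TPG (G : Type*) [Group G] where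
  tri : G → G → G
  phi : G → G
  tri_mul : ∀ a b c : G, tri a (b * c) = tri a b * tri a c
  tri_bij : ∀ a : G, Function.Bijective (tri a)
  tri_assoc : ∀ a b c : G, tri (phi a * tri a b) c = tri a (tri b c)
  phi_comp : ∀ a b : G, phi (phi a * tri a b) = phi a * tri a (phi b)

namespace TPG

variable {G : Type*} [Group G] (T : TPG G)

/-- The sub-adjacent operation `a ∘ b = Φ(a)·(a ▷ b)`. -/
def circ (a b : G) : G := T.phi a * T.tri a b

/-- `e_a = (L_a^▷)⁻¹(Φ(a)⁻¹·a)`. -/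
noncomputable def e (a : G) : G := Function.invFun (T.tri a) ((T.phi a)⁻¹ * a)

/-- `a† = (L_a^▷)⁻¹(Φ(a)⁻¹·e_a)`. -/
noncomputable def dag (a : G) : G := Function.invFun (T.tri a) ((T.phi a)⁻¹ * T.e a)

end TPG

/-!
The sub-adjacent operation `∘` is associative and left cancellative, and `e_a` is the unique
`x` with `a ∘ x = a`. Associativity then gives `e_{c ∘ x} = e_x`, and in particular `e_{e_a} = e_a`
(take `c = a`, `x = e_a`). Hence `G_a` is exactly the fibre `{y | e_y = e_a}` of the map `e`,
and the fibres of a map partition its domain.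
-/

namespace TPG

variable {G : Type*} [Group G] (T : TPG G)

lemma tri_e (a : G) : T.tri a (T.e a) = (T.phi a)⁻¹ * a :=
  Function.rightInverse_invFun (T.tri_bij a).2 _

lemma circ_e (a : G) : T.circ a (T.e a) = a := by
  rw [circ, tri_e, mul_inv_cancel_left]

lemma circ_assoc (a b c : G) : T.circ (T.circ a b) c = T.circ a (T.circ b c) := by
  simp only [circ]
  rw [T.phi_comp, T.tri_assoc, mul_assoc, T.tri_mul]

lemma circ_injective (a : G) : Function.Injective (T.circ a) := fun _ _ h =>
  (T.tri_bij a).1 (mul_left_cancel h)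

lemma eq_e_of_circ_eq_self {a x : G} (h : T.circ a x = a) : x = T.e a :=
  T.circ_injective a (h.trans (T.circ_e a).symm)

lemma e_circ (a b : G) : T.e (T.circ a b) = T.e b :=
  (T.eq_e_of_circ_eq_self (by rw [circ_assoc, circ_e])).symm

lemma e_e (a : G) : T.e (T.e a) = T.e a := by
  rw [← T.e_circ a (T.e a), circ_e]

lemma exists_eq_circ_e_iff (a y : G) : (∃ c, y = T.circ c (T.e a)) ↔ T.e y = T.e a := by
  constructor
  · rintro ⟨c, rfl⟩
    rw [e_circ, e_e]
  · intro h
    exact ⟨y, by rw [← h, circ_e]⟩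

end TPG

/-- `G` is the disjoint union of the sets `G_a`, `a ∈ G`. -/
theorem disjoint_union {G : Type*} [Group G] (T : TPG G) :
    (∀ x : G, ∃ a : G, x ∈ {y : G | ∃ b : G, y = T.circ b (T.e a)}) ∧
    (∀ a b : G,
      ({y : G | ∃ c : G, y = T.circ c (T.e a)} ∩
        {y : G | ∃ c : G, y = T.circ c (T.e b)}).Nonempty →
      {y : G | ∃ c : G, y = T.circ c (T.e a)} =
        {y : G | ∃ c : G, y = T.circ c (T.e b)}) := by
  simp only [Set.mem_ofPred_eq, T.exists_eq_circ_e_iff]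
  refine ⟨fun x => ⟨x, rfl⟩, ?_⟩
  rintro a b ⟨y, hya, hyb⟩
  rw [← hya, hyb]
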